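/- arXiv:1803.03602 — 2 statements merged into one kernel-verified Lean document; each statement's English description precedes it below -/
import Mathlib

section
/- Let n ≥ 1, k ≥ 2 and d ≥ 1 be integers, and let λ be a partition of d with l(λ) ≤ n. Then there exist a positive integer s and non-empty partitions μ_1, …, μ_s such that λ = μ_1 + μ_2 + … + μ_s (horizontal concatenation), n(k−1) < |μ_i| ≤ kn for all i < s, |μ_s| ≤ kn, and l(μ_i) ≤ n for all i. -/
/-
Cut the Young diagram of `λ` vertically: let `λ^{≤c} = partTake c λ` keep its first `c` columns
(parts `min λ_i c`) and `λ^{>c} = partDrop c λ` the rest (parts `λ_i - c`), so that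
`λ = λ^{≤c} + λ^{>c}` and both are partitions of length at most `l(λ)`. Adding one column raises
`|λ^{≤c}|` by at most `l(λ) ≤ n`, from `0` at `c = 0` up to `|λ|` for large `c`, so if `|λ| > kn`
some `c` gives `n(k-1) < |λ^{≤c}| ≤ kn`. Take `μ_1 = λ^{≤c}` and recurse on the smaller
partition `λ^{>c}`.
-/

/-- A partition, encoded as a finitely supported function `ℕ →₀ ℕ` listing its parts
`λ_0 ≥ λ_1 ≥ …` (indexed from `0`): the parts must be weakly decreasing. -/
def IsPartitionFun (f : ℕ →₀ ℕ) : Prop := ∀ ⦃i j : ℕ⦄, i ≤ j → f j ≤ f i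

/-- The size `|λ| = Σ_i λ_i` of a partition. -/
def partSize (f : ℕ →₀ ℕ) : ℕ := f.sum fun _ v => v

/-- The length `l(λ)` of a partition: the number of nonzero parts. -/
def partLen (f : ℕ →₀ ℕ) : ℕ := f.support.card

theorem Nat.exists_lt_le_add_of_succ_le_add {f : ℕ → ℕ} {a n N : ℕ} (h0 : f 0 ≤ a)
    (hstep : ∀ c, f (c + 1) ≤ f c + n) (hN : a < f N) : ∃ c, a < f c ∧ f c ≤ a + n := by
  induction N with
  | zero => omega
  | succ N ih =>
    by_cases hN' : a < f N
    · exact ih hN'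
    · exact ⟨N + 1, hN, by linarith [hstep N]⟩

theorem partSize_eq_degree (f : ℕ →₀ ℕ) : partSize f = f.degree := rfl

theorem partSize_add (f g : ℕ →₀ ℕ) : partSize (f + g) = partSize f + partSize g := by
  simp only [partSize_eq_degree, map_add]

theorem partSize_mapRange (lam : ℕ →₀ ℕ) (f : ℕ → ℕ) (h : f 0 = 0) :
    partSize (lam.mapRange f h) = ∑ i ∈ lam.support, f (lam i) := by
  unfold partSize
  rw [Finsupp.sum_of_support_subset _ Finsupp.support_mapRange _ (fun _ _ => rfl)]
  simp only [Finsupp.mapRange_apply]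

noncomputable def partTake (c : ℕ) (lam : ℕ →₀ ℕ) : ℕ →₀ ℕ :=
  lam.mapRange (fun v => min v c) (min_eq_left c.zero_le)

noncomputable def partDrop (c : ℕ) (lam : ℕ →₀ ℕ) : ℕ →₀ ℕ :=
  lam.mapRange (fun v => v - c) c.zero_sub

section Columns

variable (c : ℕ) {lam : ℕ →₀ ℕ}

@[simp]
theorem partTake_apply (i : ℕ) : partTake c lam i = min (lam i) c := Finsupp.mapRange_apply ..

@[simp]
theorem partDrop_apply (i : ℕ) : partDrop c lam i = lam i - c := Finsupp.mapRange_apply ..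

theorem partTake_add_partDrop : partTake c lam + partDrop c lam = lam := by
  ext i
  simp only [Finsupp.add_apply, partTake_apply, partDrop_apply]
  omega

theorem IsPartitionFun.partTake (hlam : IsPartitionFun lam) : IsPartitionFun (partTake c lam) :=
  fun _ _ hij => by simpa using min_le_min_right c (hlam hij)

theorem IsPartitionFun.partDrop (hlam : IsPartitionFun lam) : IsPartitionFun (partDrop c lam) :=
  fun _ _ hij => by simpa using Nat.sub_le_sub_right (hlam hij) c

theorem partLen_partTake_le : partLen (partTake c lam) ≤ partLen lam :=
  Finset.card_le_card Finsupp.support_mapRange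

theorem partLen_partDrop_le : partLen (partDrop c lam) ≤ partLen lam :=
  Finset.card_le_card Finsupp.support_mapRange

theorem partSize_partTake_add_partSize_partDrop :
    partSize (partTake c lam) + partSize (partDrop c lam) = partSize lam := by
  rw [← partSize_add, partTake_add_partDrop]

variable (lam)

theorem partTake_zero : partTake 0 lam = 0 := by
  ext i
  simp

theorem partTake_partSize : partTake (partSize lam) lam = lam := by
  ext i
  simpa [partSize_eq_degree] using Finsupp.le_degree i lam

theorem partSize_partTake_succ_le :
    partSize (partTake (c + 1) lam) ≤ partSize (partTake c lam) + partLen lam := by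
  simp only [partTake, partSize_mapRange, partLen, Finset.card_eq_sum_ones,
    ← Finset.sum_add_distrib]
  exact Finset.sum_le_sum fun i _ => by omega

end Columns

theorem exists_partSize_partTake_mem_Ioc {n a : ℕ} {lam : ℕ →₀ ℕ} (hlen : partLen lam ≤ n)
    (ha : a < partSize lam) :
    ∃ c, a < partSize (partTake c lam) ∧ partSize (partTake c lam) ≤ a + n :=
  Nat.exists_lt_le_add_of_succ_le_add (f := fun c => partSize (partTake c lam)) (N := partSize lam)
    (by simp [partTake_zero, partSize_eq_degree])
    (fun c => (partSize_partTake_succ_le c lam).trans (by omega))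
    (by simpa [partTake_partSize] using ha)

structure IsHorizontalDecomposition (n k : ℕ) (lam : ℕ →₀ ℕ) {s : ℕ} (mu : Fin s → ℕ →₀ ℕ) :
    Prop where
  isPartitionFun : ∀ i, IsPartitionFun (mu i)
  sum_eq : lam = ∑ i, mu i
  partSize_pos : ∀ i, 0 < partSize (mu i)
  lt_partSize : ∀ i : Fin s, (i : ℕ) + 1 < s → n * (k - 1) < partSize (mu i)
  partSize_le : ∀ i, partSize (mu i) ≤ k * n
  partLen_le : ∀ i, partLen (mu i) ≤ n

namespace IsHorizontalDecomposition

variable {n k : ℕ} {lam : ℕ →₀ ℕ}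

theorem single (hlam : IsPartitionFun lam) (hpos : 0 < partSize lam) (hle : partSize lam ≤ k * n)
    (hlen : partLen lam ≤ n) : IsHorizontalDecomposition n k lam fun _ : Fin 1 => lam where
  isPartitionFun _ := hlam
  sum_eq := by simp
  partSize_pos _ := hpos
  lt_partSize i h := absurd h (by omega)
  partSize_le _ := hle
  partLen_le _ := hlen

theorem cons {nu : ℕ →₀ ℕ} {s : ℕ} {mu : Fin s → ℕ →₀ ℕ} (hlam : IsPartitionFun lam)
    (hlt : n * (k - 1) < partSize lam) (hle : partSize lam ≤ k * n) (hlen : partLen lam ≤ n)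
    (h : IsHorizontalDecomposition n k nu mu) :
    IsHorizontalDecomposition n k (lam + nu) (Fin.cons lam mu : Fin (s + 1) → ℕ →₀ ℕ) where
  isPartitionFun := Fin.cases hlam h.isPartitionFun
  sum_eq := by rw [Fin.sum_cons, ← h.sum_eq]
  partSize_pos := Fin.cases ((Nat.zero_le _).trans_lt hlt) h.partSize_pos
  lt_partSize := Fin.cases (fun _ => hlt) fun i hi => h.lt_partSize i (by simpa using hi)
  partSize_le := Fin.cases hle h.partSize_le
  partLen_le := Fin.cases hlen h.partLen_le

end IsHorizontalDecomposition

theorem exists_isHorizontalDecomposition {n k : ℕ} (hk : 1 ≤ k) {lam : ℕ →₀ ℕ}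
    (hlam : IsPartitionFun lam) (hpos : 0 < partSize lam) (hlen : partLen lam ≤ n) :
    ∃ (s : ℕ) (mu : Fin (s + 1) → ℕ →₀ ℕ), IsHorizontalDecomposition n k lam mu := by
  induction hd : partSize lam using Nat.strong_induction_on generalizing lam with
  | _ d ih =>
    by_cases hsmall : d ≤ k * n
    · exact ⟨0, _, .single hlam hpos (hd ▸ hsmall) hlen⟩
    have hkn : n * (k - 1) + n = k * n := by
      rw [mul_comm k, ← Nat.mul_succ, Nat.succ_eq_add_one, Nat.sub_add_cancel hk]
    obtain ⟨c, hlt, hle⟩ := exists_partSize_partTake_mem_Ioc (a := n * (k - 1)) hlen (by omega)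
    have hsplit := partSize_partTake_add_partSize_partDrop c (lam := lam)
    obtain ⟨s, mu, hmu⟩ := ih _ (by omega) (hlam.partDrop c) (by omega)
      ((partLen_partDrop_le c).trans hlen) rfl
    have htake := IsHorizontalDecomposition.cons (hlam.partTake c) hlt (hkn ▸ hle)
      ((partLen_partTake_le c).trans hlen) hmu
    exact ⟨s + 1, _, partTake_add_partDrop c (lam := lam) ▸ htake⟩

theorem partition_horizontal_decomposition_general (n k d : ℕ) (hk : 2 ≤ k)
    (hd : 1 ≤ d) (lam : ℕ →₀ ℕ) (hlam : IsPartitionFun lam) (hsize : partSize lam = d)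
    (hlen : partLen lam ≤ n) :
    ∃ (s : ℕ) (mu : Fin s → (ℕ →₀ ℕ)), 0 < s ∧
      (∀ i, IsPartitionFun (mu i)) ∧
      lam = ∑ i, mu i ∧
      (∀ i, 0 < partSize (mu i)) ∧
      (∀ i : Fin s, (i : ℕ) + 1 < s → n * (k - 1) < partSize (mu i)) ∧
      (∀ i, partSize (mu i) ≤ k * n) ∧
      (∀ i, partLen (mu i) ≤ n) := by
  obtain ⟨s, mu, h⟩ := exists_isHorizontalDecomposition (k := k) (by omega) hlam (by omega) hlen
  exact ⟨s + 1, mu, s.succ_pos, h.isPartitionFun, h.sum_eq, h.partSize_pos, h.lt_partSize,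
    h.partSize_le, h.partLen_le⟩

/-- Any partition `λ ⊢ d` with `l(λ) ≤ n` can be written as a horizontal concatenation
(componentwise sum) `λ = μ_1 + … + μ_s` of non-empty partitions `μ_i` with
`n(k-1) < |μ_i| ≤ kn` for all `i < s`, `|μ_s| ≤ kn`, and `l(μ_i) ≤ n` for all `i`. -/
theorem partition_horizontal_decomposition (n k d : ℕ) (hn : 1 ≤ n) (hk : 2 ≤ k)
    (hd : 1 ≤ d) (lam : ℕ →₀ ℕ) (hlam : IsPartitionFun lam) (hsize : partSize lam = d)
    (hlen : partLen lam ≤ n) :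
    ∃ (s : ℕ) (mu : Fin s → (ℕ →₀ ℕ)), 0 < s ∧
      (∀ i, IsPartitionFun (mu i)) ∧
      lam = ∑ i, mu i ∧
      (∀ i, 0 < partSize (mu i)) ∧
      (∀ i : Fin s, (i : ℕ) + 1 < s → n * (k - 1) < partSize (mu i)) ∧
      (∀ i, partSize (mu i) ≤ k * n) ∧
      (∀ i, partLen (mu i) ≤ n) :=
  partition_horizontal_decomposition_general n k d hk hd lam hlam hsize hlen
end

section
/- Let K be a field, G a group, and V a finite-dimensional K-linear representation of G. Let a ≤ b be positive integers and let S be a set of generators of K[V^a]^G as a K-algebra. Suppose D is an integer such that K[V^b]^G is generated as a K-algebra by its homogeneous elements of degree ≤ D, and such that ⟨K[V^a]^G_d⟩_{GL_b} = K[V^b]^G_d for all d ≤ D. Then ⟨S⟩_{GL_b} generates K[V^b]^G as a K-algebra. -/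
open MvPolynomial

/-- The action of a group element `g : G` on the coordinate ring `K[V^m]`, where the
`n`-dimensional representation `V` of `G` is given (in coordinates) by
`ρ : G →* GLₙ(K)`.  We have `(g · f)(v) = f(g⁻¹ · v)`. -/
noncomputable def gAction {K : Type*} [Field K] {G : Type*} [Group G] {n : ℕ}
    (ρ : G →* Matrix.GeneralLinearGroup (Fin n) K) (m : ℕ) (g : G) :
    MvPolynomial (Fin m × Fin n) K →ₐ[K] MvPolynomial (Fin m × Fin n) K :=
  aeval fun li => ∑ j, C ((↑(ρ g⁻¹) : Matrix (Fin n) (Fin n) K) li.2 j) * X (li.1, j)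

/-- The set of `G`-invariant polynomial functions on `V^m`, i.e. `K[V^m]^G`. -/
def invariants {K : Type*} [Field K] {G : Type*} [Group G] {n : ℕ}
    (ρ : G →* Matrix.GeneralLinearGroup (Fin n) K) (m : ℕ) :
    Set (MvPolynomial (Fin m × Fin n) K) :=
  {f | ∀ g : G, gAction ρ m g f = f}

/-- The action of `σ ∈ GL_m(K)` on `K[V^m] = K[V ⊗ K^m]` through the factor `K^m`:
`(σ · f)(v) = f(σ⁻¹ · v)`, in coordinates `X (l, i) ↦ ∑ l', (σ⁻¹)_{l l'} • X (l', i)`. -/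
noncomputable def glAction {K : Type*} [Field K] (n m : ℕ)
    (σ : Matrix.GeneralLinearGroup (Fin m) K) :
    MvPolynomial (Fin m × Fin n) K →ₐ[K] MvPolynomial (Fin m × Fin n) K :=
  aeval fun li => ∑ l', C ((↑(σ⁻¹) : Matrix (Fin m) (Fin m) K) li.1 l') * X (l', li.2)

/-- The inclusion `K[V^a] ⊆ K[V^b]` (for `a ≤ b`), given by pullback along the
projection of `V^b` onto the first `a` summands. -/
noncomputable def incl {K : Type*} [Field K] (n : ℕ) {a b : ℕ} (h : a ≤ b) :
    MvPolynomial (Fin a × Fin n) K →ₐ[K] MvPolynomial (Fin b × Fin n) K :=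
  rename (Prod.map (Fin.castLE h) id)

/-- The polarization `⟨S⟩_{GL_m}` of a set `S ⊆ K[V^a]` inside `K[V^b]`:
the smallest `GL_b(K)`-stable subspace containing (the image of) `S`, i.e. the span of
`{σ · s : σ ∈ GL_b(K), s ∈ S}`. -/
noncomputable def polarization {K : Type*} [Field K] (n : ℕ) {a b : ℕ} (h : a ≤ b)
    (S : Set (MvPolynomial (Fin a × Fin n) K)) :
    Submodule K (MvPolynomial (Fin b × Fin n) K) :=
  Submodule.span K
    {f | ∃ (σ : Matrix.GeneralLinearGroup (Fin b) K) (s : MvPolynomial (Fin a × Fin n) K),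
      s ∈ S ∧ f = glAction n b σ (incl n h s)}


/- Each `σ ∈ GL_b(K)` acts by an algebra map, so it carries `K[S] ⊇ K[V^a]^G` into the algebra
generated by `⟨S⟩_{GL_b}`. By hypothesis the polarized invariants of degree `≤ D` span all
invariants of those degrees, and these generate `K[V^b]^G`. -/

section Polarization

variable {K : Type*} [Field K] {n a b : ℕ} (h : a ≤ b)

theorem glAction_incl_mem_adjoin_polarization {S : Set (MvPolynomial (Fin a × Fin n) K)}
    (σ : Matrix.GeneralLinearGroup (Fin b) K) {s : MvPolynomial (Fin a × Fin n) K}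
    (hs : s ∈ Algebra.adjoin K S) :
    glAction n b σ (incl n h s) ∈ Algebra.adjoin K (polarization n h S : Set _) := by
  have hmap : (glAction n b σ).comp (incl n h) s ∈
      Algebra.adjoin K ((glAction n b σ).comp (incl n h) '' S) := by
    rw [← AlgHom.map_adjoin]
    exact ⟨s, hs, rfl⟩
  refine Algebra.adjoin_mono ?_ hmap
  rintro _ ⟨t, ht, rfl⟩
  exact Submodule.subset_span ⟨σ, t, ht, rfl⟩

theorem polarization_le_adjoin_polarization {S T : Set (MvPolynomial (Fin a × Fin n) K)}
    (hT : T ⊆ Algebra.adjoin K S) :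
    polarization n h T ≤
      Subalgebra.toSubmodule (Algebra.adjoin K (polarization n h S : Set _)) := by
  rw [polarization, Submodule.span_le]
  rintro _ ⟨σ, t, ht, rfl⟩
  exact glAction_incl_mem_adjoin_polarization h σ (hT ht)

end Polarization

theorem polarized_generating_set_general {K : Type*} [Field K] {G : Type*} [Group G] {n : ℕ}
    (ρ : G →* Matrix.GeneralLinearGroup (Fin n) K) {a b : ℕ} (hab : a ≤ b)
    (S : Set (MvPolynomial (Fin a × Fin n) K))
    (hSgen : invariants ρ a ⊆ ↑(Algebra.adjoin K S))
    (D : ℕ)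
    (hD : invariants ρ b ⊆
      ↑(Algebra.adjoin K {f | f ∈ invariants ρ b ∧ ∃ d ≤ D, f.IsHomogeneous d}))
    (hpol : ∀ d ≤ D,
      polarization n hab {f | f ∈ invariants ρ a ∧ f.IsHomogeneous d} =
        Submodule.span K {f | f ∈ invariants ρ b ∧ f.IsHomogeneous d}) :
    invariants ρ b ⊆ ↑(Algebra.adjoin K (↑(polarization n hab S) :
      Set (MvPolynomial (Fin b × Fin n) K))) := by
  refine fun f hf ↦ Algebra.adjoin_le ?_ (hD hf)
  rintro g ⟨hg, d, hd, hgd⟩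
  have hspan : g ∈ Submodule.span K {f | f ∈ invariants ρ b ∧ f.IsHomogeneous d} :=
    Submodule.subset_span ⟨hg, hgd⟩
  rw [← hpol d hd] at hspan
  exact polarization_le_adjoin_polarization hab (fun s hs ↦ hSgen hs.1) hspan

/-- If `S` generates `K[V^a]^G`, `K[V^b]^G` is generated by its homogeneous elements of
degree `≤ D`, and polarization of the degree-`d` invariants from `a` copies gives all
degree-`d` invariants in `b` copies for every `d ≤ D`, then the polarization `⟨S⟩_{GL_b}`
generates `K[V^b]^G` as a `K`-algebra. -/
theorem polarized_generating_set {K : Type*} [Field K] {G : Type*} [Group G] {n : ℕ}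
    (ρ : G →* Matrix.GeneralLinearGroup (Fin n) K) {a b : ℕ} (ha : 1 ≤ a) (hab : a ≤ b)
    (S : Set (MvPolynomial (Fin a × Fin n) K))
    (hS : S ⊆ invariants ρ a)
    (hSgen : invariants ρ a ⊆ ↑(Algebra.adjoin K S))
    (D : ℕ)
    (hD : invariants ρ b ⊆
      ↑(Algebra.adjoin K {f | f ∈ invariants ρ b ∧ ∃ d ≤ D, f.IsHomogeneous d}))
    (hpol : ∀ d ≤ D,
      polarization n hab {f | f ∈ invariants ρ a ∧ f.IsHomogeneous d} =
        Submodule.span K {f | f ∈ invariants ρ b ∧ f.IsHomogeneous d}) :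
    invariants ρ b ⊆ ↑(Algebra.adjoin K (↑(polarization n hab S) :
      Set (MvPolynomial (Fin b × Fin n) K))) :=
  polarized_generating_set_general ρ hab S hSgen D hD hpol
end
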